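/- arXiv:1903.03395 — 3 statements merged into one kernel-verified Lean document; each statement's English description precedes it below -/
import Mathlib

section
/- For any classical-classical-quantum multiple access channel family 𝐖 = {W^k : X^k × Y^k → S((ℂ^d)^{⊗k})}_{k∈ℕ} (not necessarily discrete and memoryless), every transmission rate pair achievable with stochastic encoders is an achievable simultaneous identification rate pair: C_st(𝐖) ⊆ C_id^sim(𝐖). -/
open Matrix BigOperators
open scoped ComplexOrder

/-- A probability distribution on a finite set. -/
def IsProbDist {α : Type} [Fintype α] (P : α → ℝ) : Prop :=
  (∀ a, 0 ≤ P a) ∧ ∑ a, P a = 1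

/-- Success probability of a pair of stochastic encoders `P`, `Q` and a decoding
operator `D` over a channel output map `W`. -/
noncomputable def succProb {X Y n : Type} [Fintype X] [Fintype Y] [Fintype n]
    [DecidableEq n] (P : X → ℝ) (Q : Y → ℝ) (D : Matrix n n ℂ)
    (W : X → Y → Matrix n n ℂ) : ℝ :=
  ∑ x, ∑ y, P x * Q y * ((D * W x y).trace).re

/-- `(R₁, R₂)` is an achievable transmission rate pair, with stochastic encoders and
maximal error, for the CCQ channel family `W`. -/
def AchievableRatePairSt {X Y : Type} [Fintype X] [Fintype Y] (d : ℕ)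
    (W : (k : ℕ) → (Fin k → X) → (Fin k → Y) →
      Matrix (Fin k → Fin d) (Fin k → Fin d) ℂ) (R₁ R₂ : ℝ) : Prop :=
  0 ≤ R₁ ∧ 0 ≤ R₂ ∧
  ∀ ε : ℝ, 0 < ε → ∀ δ : ℝ, 0 < δ → ∃ k₀ : ℕ, ∀ k : ℕ, k₀ ≤ k →
    ∃ (M N : ℕ) (P : Fin M → (Fin k → X) → ℝ) (Q : Fin N → (Fin k → Y) → ℝ)
      (D : Fin M → Fin N → Matrix (Fin k → Fin d) (Fin k → Fin d) ℂ),
      (∀ m, IsProbDist (P m)) ∧ (∀ n, IsProbDist (Q n)) ∧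
      (∀ m n, (D m n).PosSemidef) ∧
      (∑ m, ∑ n, D m n = (1 : Matrix (Fin k → Fin d) (Fin k → Fin d) ℂ)) ∧
      R₁ - δ ≤ Real.logb 2 (M : ℝ) / (k : ℝ) ∧
      R₂ - δ ≤ Real.logb 2 (N : ℝ) / (k : ℝ) ∧
      (∀ m n, 1 - succProb (P m) (Q n) (D m n) (W k) ≤ ε)

/-- Transmission capacity region (stochastic encoders, maximal error). -/
def Cst {X Y : Type} [Fintype X] [Fintype Y] (d : ℕ)
    (W : (k : ℕ) → (Fin k → X) → (Fin k → Y) →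
      Matrix (Fin k → Fin d) (Fin k → Fin d) ℂ) : Set (ℝ × ℝ) :=
  {p | AchievableRatePairSt d W p.1 p.2}

/-- `(R₁, R₂)` is an achievable simultaneous identification rate pair for the CCQ
channel family `W`. -/
def AchievableRatePairIDSim {X Y : Type} [Fintype X] [Fintype Y] (d : ℕ)
    (W : (k : ℕ) → (Fin k → X) → (Fin k → Y) →
      Matrix (Fin k → Fin d) (Fin k → Fin d) ℂ) (R₁ R₂ : ℝ) : Prop :=
  0 ≤ R₁ ∧ 0 ≤ R₂ ∧
  ∀ ε₁ : ℝ, 0 < ε₁ → ∀ ε₂ : ℝ, 0 < ε₂ → ∀ δ : ℝ, 0 < δ →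
    ∃ k₀ : ℕ, ∀ k : ℕ, k₀ ≤ k →
    ∃ (M N : ℕ) (P : Fin M → (Fin k → X) → ℝ) (Q : Fin N → (Fin k → Y) → ℝ)
      (I : Fin M → Fin N → Matrix (Fin k → Fin d) (Fin k → Fin d) ℂ),
      (∀ m, IsProbDist (P m)) ∧ (∀ n, IsProbDist (Q n)) ∧
      (∀ m n, (I m n).PosSemidef ∧
        ((1 : Matrix (Fin k → Fin d) (Fin k → Fin d) ℂ) - I m n).PosSemidef) ∧
      -- simultaneity: all the `I m n` arise from a single common POVM
      (∃ (R S : ℕ) (E : Fin R → Fin S → Matrix (Fin k → Fin d) (Fin k → Fin d) ℂ)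
        (A : Fin M → Finset (Fin R)) (B : Fin N → Finset (Fin S)),
        (∀ r s, (E r s).PosSemidef) ∧
        (∑ r, ∑ s, E r s = (1 : Matrix (Fin k → Fin d) (Fin k → Fin d) ℂ)) ∧
        (∀ m n, I m n = ∑ r ∈ A m, ∑ s ∈ B n, E r s)) ∧
      R₁ - δ ≤ Real.logb 2 (Real.logb 2 (M : ℝ)) / (k : ℝ) ∧
      R₂ - δ ≤ Real.logb 2 (Real.logb 2 (N : ℝ)) / (k : ℝ) ∧
      (∀ m n, 1 - succProb (P m) (Q n) (I m n) (W k) ≤ ε₁) ∧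
      (∀ m n m' n', (m, n) ≠ (m', n') →
        succProb (P m) (Q n) (I m' n') (W k) ≤ ε₂)

/-- Simultaneous identification capacity region. -/
def CidSim {X Y : Type} [Fintype X] [Fintype Y] (d : ℕ)
    (W : (k : ℕ) → (Fin k → X) → (Fin k → Y) →
      Matrix (Fin k → Fin d) (Fin k → Fin d) ℂ) : Set (ℝ × ℝ) :=
  {p | AchievableRatePairIDSim d W p.1 p.2}

/-!
Take a transmission code `(P m, Q n, D m n)` with maximal error `ε`, and families of nonempty
sets `A a ⊆ Fin M`, `B b ⊆ Fin N` any two of which overlap in at most an `η`-fraction. Send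
`(a, b)` with the uniform mixtures of the `P m`, `m ∈ A a`, and of the `Q n`, `n ∈ B b`, and
identify `(a, b)` by the outcomes `A a ×ˢ B b` of the decoding POVM; this is simultaneous since
all the tests coarse-grain the single POVM `D`. Each sent pair `(m, n)` is decoded correctly with
probability at least `1 - ε`, so the first-kind error is at most `ε`, and since
`A a ×ˢ B b` meets any other `A a' ×ˢ B b'` in at most an `η`-fraction of its elements, the
second-kind error is at most `ε + η`.

Such families with `log log M₁ ≥ log M - ⌈2/η⌉ - 1` exist: over the alphabet `Fin q`,
`q = 2 ^ ⌈2/η⌉`, a Gilbert–Varshamov code of length `n = M / q` and distance `n - ⌊η n⌋` has at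
least `2 ^ n` words, and the graphs `{(i, c i)}` of its words, embedded in `Fin n × Fin q ⊆ Fin M`,
pairwise meet in at most `η n` points.
-/

open Finset

namespace Matrix

variable {ι 𝕜 : Type*} [DecidableEq ι] [RCLike 𝕜]

lemma PosSemidef.trace_mul_nonneg [Fintype ι] {A B : Matrix ι ι 𝕜} (hA : A.PosSemidef)
    (hB : B.PosSemidef) : 0 ≤ (A * B).trace := by
  obtain ⟨C, rfl⟩ : ∃ C : Matrix ι ι 𝕜, A = Cᴴ * C := by
    open scoped MatrixOrder Matrix.Norms.L2Operator in
    exact CStarAlgebra.nonneg_iff_eq_star_mul_self.mp hA.nonneg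
  rw [Matrix.mul_assoc, Matrix.trace_mul_comm]
  exact (hB.mul_mul_conjTranspose_same C).trace_nonneg

lemma PosSemidef.one_sub_sum {κ : Type*} [Fintype κ] {D : κ → Matrix ι ι 𝕜}
    (hD : ∀ q, (D q).PosSemidef) (hsum : ∑ q, D q = 1) (S : Finset κ) :
    (1 - ∑ q ∈ S, D q).PosSemidef := by
  classical
  rw [← hsum, ← sum_sdiff (subset_univ S), add_sub_cancel_right]
  exact posSemidef_sum _ fun q _ => hD q

end Matrix

lemma IsProbDist.expect {γ : Type*} {α : Type} [Fintype α] {A : Finset γ} (hA : A.Nonempty)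
    {P : γ → α → ℝ} (hP : ∀ m ∈ A, IsProbDist (P m)) :
    IsProbDist fun x => 𝔼 m ∈ A, P m x :=
  ⟨fun x => expect_nonneg fun m hm => (hP m hm).1 x, by
    rw [← expect_sum_comm, expect_congr rfl fun m hm => (hP m hm).2, expect_const hA]⟩

section succProb

variable {α β ι : Type} [Fintype α] [Fintype β] [Fintype ι] [DecidableEq ι]
  {P : α → ℝ} {Q : β → ℝ} {D : Matrix ι ι ℂ} {W : α → β → Matrix ι ι ℂ}

lemma succProb_sum_decoder {γ : Type*} (s : Finset γ) (D : γ → Matrix ι ι ℂ) :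
    succProb P Q (∑ i ∈ s, D i) W = ∑ i ∈ s, succProb P Q (D i) W := by
  simp only [succProb, sum_mul, trace_sum, Complex.re_sum, mul_sum]
  exact (sum_congr rfl fun _ _ => sum_comm).trans sum_comm

lemma succProb_expect_left {γ : Type*} (A : Finset γ) (P : γ → α → ℝ) :
    succProb (fun x => 𝔼 m ∈ A, P m x) Q D W = 𝔼 m ∈ A, succProb (P m) Q D W := by
  simp only [succProb, expect_mul, expect_sum_comm]

lemma succProb_expect_right {γ : Type*} (B : Finset γ) (Q : γ → β → ℝ) :
    succProb P (fun y => 𝔼 n ∈ B, Q n y) D W = 𝔼 n ∈ B, succProb P (Q n) D W := by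
  simp only [succProb, mul_expect, expect_mul, expect_sum_comm]

lemma succProb_nonneg (hP : ∀ x, 0 ≤ P x) (hQ : ∀ y, 0 ≤ Q y) (hD : D.PosSemidef)
    (hW : ∀ x y, (W x y).PosSemidef) : 0 ≤ succProb P Q D W :=
  sum_nonneg fun x _ => sum_nonneg fun y _ => mul_nonneg (mul_nonneg (hP x) (hQ y))
    (Complex.nonneg_iff.mp (hD.trace_mul_nonneg (hW x y))).1

lemma succProb_one (hP : IsProbDist P) (hQ : IsProbDist Q) (hW : ∀ x y, (W x y).trace = 1) :
    succProb P Q 1 W = 1 := by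
  simp only [succProb, Matrix.one_mul, hW, Complex.one_re, mul_one]
  rw [← sum_mul_sum, hP.2, hQ.2, mul_one]

lemma sum_succProb_of_sum_eq_one {κ : Type*} [Fintype κ] {D : κ → Matrix ι ι ℂ}
    (hP : IsProbDist P) (hQ : IsProbDist Q) (hW : ∀ x y, (W x y).trace = 1)
    (hsum : ∑ q, D q = 1) : ∑ q, succProb P Q (D q) W = 1 := by
  rw [← succProb_sum_decoder (s := univ), hsum, succProb_one hP hQ hW]

end succProb

section Averaging

-- `p t q` is to be read as the probability that the message `t` is decoded as `q`.
variable {κ : Type*} {p : κ → κ → ℝ} {ε : ℝ}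

lemma le_expect_sum_self (hp : ∀ t q, 0 ≤ p t q) (hdiag : ∀ t, 1 - ε ≤ p t t)
    {T : Finset κ} (hT : T.Nonempty) : 1 - ε ≤ 𝔼 t ∈ T, ∑ q ∈ T, p t q :=
  le_expect hT fun t ht => (hdiag t).trans (single_le_sum (fun q _ => hp t q) ht)

variable [Fintype κ] [DecidableEq κ]

lemma sum_le_of_diag (hp : ∀ t q, 0 ≤ p t q) (hrow : ∀ t, ∑ q, p t q = 1)
    (hdiag : ∀ t, 1 - ε ≤ p t t) (S : Finset κ) (t : κ) :
    ∑ q ∈ S, p t q ≤ ε + if t ∈ S then 1 else 0 := by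
  have hS : ∑ q ∈ S, p t q ≤ ∑ q ∈ insert t S, p t q :=
    sum_le_sum_of_subset_of_nonneg (subset_insert t S) fun q _ _ => hp t q
  have hinsert : ∑ q ∈ insert t S, p t q ≤ 1 :=
    hrow t ▸ sum_le_sum_of_subset_of_nonneg (subset_univ _) fun q _ _ => hp t q
  split_ifs with htS
  · linarith [hdiag t, (single_le_sum (fun q _ => hp t q) (mem_univ t)).trans (hrow t).le]
  · rw [sum_insert htS] at hinsert
    linarith [hdiag t]

lemma expect_sum_le_of_diag (hp : ∀ t q, 0 ≤ p t q) (hrow : ∀ t, ∑ q, p t q = 1)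
    (hdiag : ∀ t, 1 - ε ≤ p t t) {T S : Finset κ} (hT : T.Nonempty) {η : ℝ}
    (hTS : (#(T ∩ S) : ℝ) ≤ η * #T) : 𝔼 t ∈ T, ∑ q ∈ S, p t q ≤ ε + η := by
  have hcard : (0 : ℝ) < #T := by exact_mod_cast hT.card_pos
  calc 𝔼 t ∈ T, ∑ q ∈ S, p t q
      ≤ 𝔼 t ∈ T, (ε + if t ∈ S then 1 else 0) :=
        expect_le_expect fun t _ => sum_le_of_diag hp hrow hdiag S t
    _ = ε + #(T ∩ S) / #T := by
        rw [expect_add_distrib, expect_const hT, expect_eq_sum_div_card, sum_boole,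
          filter_mem_eq_inter]
    _ ≤ ε + η := by
        gcongr
        rwa [div_le_iff₀ hcard]

end Averaging

def AlmostDisjoint {ι α : Type*} [DecidableEq α] (η : ℝ) (A : ι → Finset α) : Prop :=
  (∀ i, (A i).Nonempty) ∧ ∀ i j, i ≠ j → (#(A i ∩ A j) : ℝ) ≤ η * #(A i)

namespace AlmostDisjoint

variable {ι ι' α β : Type*} [DecidableEq α] [DecidableEq β] {η : ℝ}
  {A : ι → Finset α} {B : ι' → Finset β}

lemma product (hA : AlmostDisjoint η A) (hB : AlmostDisjoint η B) :
    AlmostDisjoint η fun i : ι × ι' => A i.1 ×ˢ B i.2 := by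
  refine ⟨fun i => (hA.1 i.1).product (hB.1 i.2), fun ⟨a, b⟩ ⟨a', b'⟩ hne => ?_⟩
  simp only [product_inter_product, card_product, Nat.cast_mul]
  by_cases haa : a = a'
  · subst haa
    have hbb : b ≠ b' := fun h => hne (by rw [h])
    rw [inter_self]
    exact (mul_le_mul_of_nonneg_left (hB.2 b b' hbb) (Nat.cast_nonneg _)).trans_eq
      (by ring)
  · have hAB : (#(B b ∩ B b') : ℝ) ≤ #(B b) := by
      exact_mod_cast card_le_card inter_subset_left
    exact (mul_le_mul (hA.2 a a' haa) hAB (Nat.cast_nonneg _)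
      ((Nat.cast_nonneg _).trans (hA.2 a a' haa))).trans_eq (by ring)

lemma map (hA : AlmostDisjoint η A) (f : α ↪ β) : AlmostDisjoint η fun i => (A i).map f :=
  ⟨fun i => (hA.1 i).map, fun i j hij => by
    simpa only [← map_inter, card_map] using hA.2 i j hij⟩

end AlmostDisjoint

section IdentificationCode

variable {α β ι : Type} [Fintype α] [Fintype β] [Fintype ι] [DecidableEq ι]
  {W : α → β → Matrix ι ι ℂ}

lemma succProb_expect_expect_sum {μ ν : Type*} {P : μ → α → ℝ} {Q : ν → β → ℝ}
    {D : μ → ν → Matrix ι ι ℂ} (A A' : Finset μ) (B B' : Finset ν) :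
    succProb (fun x => 𝔼 m ∈ A, P m x) (fun y => 𝔼 n ∈ B, Q n y)
        (∑ m ∈ A', ∑ n ∈ B', D m n) W
      = 𝔼 t ∈ A ×ˢ B, ∑ q ∈ A' ×ˢ B', succProb (P t.1) (Q t.2) (D q.1 q.2) W := by
  rw [succProb_expect_left, expect_product]
  refine expect_congr rfl fun m _ => ?_
  rw [succProb_expect_right]
  refine expect_congr rfl fun n _ => ?_
  rw [← sum_product', succProb_sum_decoder]

theorem exists_simultaneous_idCode {M N M₁ N₁ : ℕ}
    (hW : ∀ x y, (W x y).PosSemidef ∧ (W x y).trace = 1)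
    {P : Fin M → α → ℝ} {Q : Fin N → β → ℝ} {D : Fin M → Fin N → Matrix ι ι ℂ}
    (hP : ∀ m, IsProbDist (P m)) (hQ : ∀ n, IsProbDist (Q n))
    (hD : ∀ m n, (D m n).PosSemidef) (hDsum : ∑ m, ∑ n, D m n = 1) {ε : ℝ}
    (herr : ∀ m n, 1 - succProb (P m) (Q n) (D m n) W ≤ ε) {η : ℝ}
    {A : Fin M₁ → Finset (Fin M)} {B : Fin N₁ → Finset (Fin N)}
    (hA : AlmostDisjoint η A) (hB : AlmostDisjoint η B) :
    ∃ (P' : Fin M₁ → α → ℝ) (Q' : Fin N₁ → β → ℝ) (I : Fin M₁ → Fin N₁ → Matrix ι ι ℂ),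
      (∀ a, IsProbDist (P' a)) ∧ (∀ b, IsProbDist (Q' b)) ∧
      (∀ a b, (I a b).PosSemidef ∧ ((1 : Matrix ι ι ℂ) - I a b).PosSemidef) ∧
      (∃ (R S : ℕ) (E : Fin R → Fin S → Matrix ι ι ℂ)
        (A' : Fin M₁ → Finset (Fin R)) (B' : Fin N₁ → Finset (Fin S)),
        (∀ r s, (E r s).PosSemidef) ∧ (∑ r, ∑ s, E r s = (1 : Matrix ι ι ℂ)) ∧
        (∀ a b, I a b = ∑ r ∈ A' a, ∑ s ∈ B' b, E r s)) ∧
      (∀ a b, 1 - succProb (P' a) (Q' b) (I a b) W ≤ ε) ∧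
      (∀ a b a' b', (a, b) ≠ (a', b') → succProb (P' a) (Q' b) (I a' b') W ≤ ε + η) := by
  set p : Fin M × Fin N → Fin M × Fin N → ℝ :=
    fun t q => succProb (P t.1) (Q t.2) (D q.1 q.2) W
  have hp : ∀ t q, 0 ≤ p t q := fun t q =>
    succProb_nonneg (hP t.1).1 (hQ t.2).1 (hD q.1 q.2) fun x y => (hW x y).1
  have hsum : ∑ q : Fin M × Fin N, D q.1 q.2 = 1 := by rwa [Fintype.sum_prod_type]
  have hrow : ∀ t, ∑ q, p t q = 1 := fun t =>
    sum_succProb_of_sum_eq_one (hP t.1) (hQ t.2) (fun x y => (hW x y).2) hsum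
  have hdiag : ∀ t, 1 - ε ≤ p t t := fun t => by linarith [herr t.1 t.2]
  have hAB := hA.product hB
  refine ⟨fun a x => 𝔼 m ∈ A a, P m x, fun b y => 𝔼 n ∈ B b, Q n y,
    fun a b => ∑ m ∈ A a, ∑ n ∈ B b, D m n,
    fun a => IsProbDist.expect (hA.1 a) fun m _ => hP m,
    fun b => IsProbDist.expect (hB.1 b) fun n _ => hQ n,
    fun a b => ⟨posSemidef_sum _ fun m _ => posSemidef_sum _ fun n _ => hD m n, ?_⟩,
    ⟨M, N, D, A, B, hD, hDsum, fun _ _ => rfl⟩, fun a b => ?_, fun a b a' b' hne => ?_⟩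
  · dsimp only
    rw [← sum_product' (f := D)]
    exact Matrix.PosSemidef.one_sub_sum (fun q : Fin M × Fin N => hD q.1 q.2) hsum _
  · rw [succProb_expect_expect_sum, sub_le_comm]
    exact le_expect_sum_self hp hdiag (hAB.1 (a, b))
  · rw [succProb_expect_expect_sum]
    exact expect_sum_le_of_diag hp hrow hdiag (hAB.1 (a, b)) (hAB.2 (a, b) (a', b') hne)

end IdentificationCode

section Codes

variable {n q : ℕ}

lemma card_hammingBall_le (hq : 0 < q) (c : Fin n → Fin q) (r : ℕ) :
    #{y | hammingDist y c ≤ r} ≤ 2 ^ n * q ^ r := by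
  classical
  let cube : Finset (Fin n) → Finset (Fin n → Fin q) :=
    fun S => Fintype.piFinset fun i => if i ∈ S then univ else {c i}
  have hsub : ({y | hammingDist y c ≤ r} : Finset (Fin n → Fin q)) ⊆
      ({S | #S ≤ r} : Finset (Finset (Fin n))).biUnion cube := by
    intro y hy
    refine mem_biUnion.mpr
      ⟨({i | y i ≠ c i} : Finset (Fin n)), by simpa [hammingDist] using hy, ?_⟩
    simp only [cube, Fintype.mem_piFinset]
    intro i
    split_ifs with hi
    · exact mem_univ _
    · simpa using hi
  have hcube : ∀ S, #(cube S) = q ^ #S := fun S => by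
    simp [cube, apply_ite card, prod_ite_mem]
  calc #{y | hammingDist y c ≤ r}
      ≤ ∑ S ∈ {S : Finset (Fin n) | #S ≤ r}, #(cube S) :=
        (card_le_card hsub).trans card_biUnion_le
    _ ≤ ∑ _S ∈ {S : Finset (Fin n) | #S ≤ r}, q ^ r :=
        sum_le_sum fun S hS => hcube S ▸ Nat.pow_le_pow_right hq (mem_filter.mp hS).2
    _ ≤ 2 ^ n * q ^ r := by
        rw [sum_const, smul_eq_mul]
        gcongr
        simpa using card_filter_le (univ : Finset (Finset (Fin n))) _

lemma exists_code_pow_le_card_mul (hq : 0 < q) (d : ℕ) :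
    ∃ C : Finset (Fin n → Fin q), (∀ c ∈ C, ∀ c' ∈ C, c ≠ c' → d ≤ hammingDist c c') ∧
      q ^ n ≤ #C * (2 ^ n * q ^ (d - 1)) := by
  classical
  let IsCode : Finset (Fin n → Fin q) → Prop :=
    fun C => ∀ c ∈ C, ∀ c' ∈ C, c ≠ c' → d ≤ hammingDist c c'
  obtain ⟨C, hC, hmax⟩ := exists_max_image {C | IsCode C} card ⟨∅, by simp [IsCode]⟩
  replace hC : IsCode C := (mem_filter.mp hC).2
  -- a code of maximal size cannot be extended, so its balls of radius `d - 1` cover everything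
  have hcover : ∀ y, ∃ c ∈ C, hammingDist y c ≤ d - 1 := by
    intro y
    by_contra! hfar
    have hy : y ∉ C := fun hy => by simpa using hfar y hy
    have hext : IsCode (insert y C) := by
      intro c hc c' hc' hne
      rcases mem_insert.mp hc with rfl | hcC <;> rcases mem_insert.mp hc' with rfl | hc'C
      · exact absurd rfl hne
      · have := hfar c' hc'C; omega
      · have := hfar c hcC; rw [hammingDist_comm]; omega
      · exact hC c hcC c' hc'C hne
    have := hmax _ (mem_filter.mpr ⟨mem_univ _, hext⟩)
    rw [card_insert_of_notMem hy] at this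
    omega
  refine ⟨C, hC, ?_⟩
  calc q ^ n = #(univ : Finset (Fin n → Fin q)) := by simp
    _ ≤ #(C.biUnion fun c => {y | hammingDist y c ≤ d - 1}) := card_le_card fun y _ => by
        obtain ⟨c, hc, hyc⟩ := hcover y
        exact mem_biUnion.mpr ⟨c, hc, mem_filter.mpr ⟨mem_univ _, hyc⟩⟩
    _ ≤ ∑ c ∈ C, #{y | hammingDist y c ≤ d - 1} := card_biUnion_le
    _ ≤ #C * (2 ^ n * q ^ (d - 1)) := by
        rw [← smul_eq_mul, ← sum_const]
        exact sum_le_sum fun c _ => card_hammingBall_le hq c (d - 1)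

end Codes

section AlmostDisjointFamilies

variable {ι κ : Type*}

def graphEmb (c : ι → κ) : ι ↪ ι × κ := ⟨fun i => (i, c i), fun _ _ h => congrArg Prod.fst h⟩

@[simp]
lemma graphEmb_apply (c : ι → κ) (i : ι) : graphEmb c i = (i, c i) := rfl

lemma card_map_graphEmb_inter_add_hammingDist [Fintype ι] [DecidableEq ι] [DecidableEq κ]
    (c c' : ι → κ) :
    #(univ.map (graphEmb c) ∩ univ.map (graphEmb c')) + hammingDist c c' = Fintype.card ι := by
  have hinter : univ.map (graphEmb c) ∩ univ.map (graphEmb c') =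
      ({i | c i = c' i} : Finset ι).map (graphEmb c) := by
    ext ⟨i, x⟩
    simp only [mem_inter, mem_map, mem_univ, true_and, mem_filter, graphEmb_apply,
      Prod.mk.injEq]
    constructor
    · rintro ⟨⟨_, rfl, rfl⟩, _, rfl, h⟩
      exact ⟨_, h.symm, rfl, rfl⟩
    · rintro ⟨_, h, rfl, rfl⟩
      exact ⟨⟨_, rfl, rfl⟩, _, rfl, h.symm⟩
  rw [hinter, card_map, hammingDist, card_filter_add_card_filter_not, card_univ]

lemma exists_almostDisjoint_graphs {η : ℝ} (hη : 0 < η) (hη1 : η < 1) {n s : ℕ} (hn : 0 < n)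
    (hs : 2 / η ≤ s) :
    ∃ (M₁ : ℕ) (A : Fin M₁ → Finset (Fin n × Fin (2 ^ s))), AlmostDisjoint η A ∧ 2 ^ n ≤ M₁ := by
  set j := ⌊η * n⌋₊
  have hj : (j : ℝ) ≤ η * n := Nat.floor_le (by positivity)
  have hjn : j < n := by
    have : η * n < n := mul_lt_of_lt_one_left (by exact_mod_cast hn) hη1
    exact_mod_cast hj.trans_lt this
  obtain ⟨C, hC, hcard⟩ := exists_code_pow_le_card_mul (n := n) (Nat.two_pow_pos s) (n - j)
  have : NeZero n := ⟨hn.ne'⟩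
  refine ⟨#C, fun a => univ.map (graphEmb (C.equivFin.symm a : Fin n → Fin (2 ^ s))),
    ⟨fun a => univ_nonempty.map, fun a a' haa' => ?_⟩, ?_⟩
  · have hdist := hC _ (C.equivFin.symm a).2 _ (C.equivFin.symm a').2
      fun h => haa' (C.equivFin.symm.injective (Subtype.ext h))
    have hsum := card_map_graphEmb_inter_add_hammingDist (C.equivFin.symm a : Fin n → Fin (2 ^ s))
      (C.equivFin.symm a')
    rw [Fintype.card_fin] at hsum
    dsimp only
    rw [card_map, card_univ, Fintype.card_fin]
    calc _ ≤ (j : ℝ) := by exact_mod_cast (by omega : _ ≤ j)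
      _ ≤ η * n := hj
  · have hexp : 2 * n ≤ s * (j + 1) := by
      have hfloor : η * n < j + 1 := Nat.lt_floor_add_one _
      have : (2 * n : ℝ) ≤ s * (j + 1) :=
        calc (2 * n : ℝ) = 2 / η * (η * n) := by field_simp
          _ ≤ s * (j + 1) := by gcongr
      exact_mod_cast this
    have hpow : 2 ^ n * 2 ^ n * (2 ^ s) ^ (n - j - 1) ≤ (2 ^ s) ^ n :=
      calc 2 ^ n * 2 ^ n * (2 ^ s) ^ (n - j - 1)
          ≤ 2 ^ (s * (j + 1)) * (2 ^ s) ^ (n - j - 1) := by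
            rw [← pow_add, ← two_mul]
            gcongr
            norm_num
        _ = (2 ^ s) ^ n := by rw [pow_mul, ← pow_add]; congr 1; omega
    exact le_of_mul_le_mul_right (a := 2 ^ n * (2 ^ s) ^ (n - j - 1))
      (by rw [← mul_assoc]; exact hpow.trans hcard) (by positivity)

end AlmostDisjointFamilies

lemma logb_two_pow (k : ℕ) : Real.logb 2 (2 ^ k) = k := by
  rw [Real.logb_pow, Real.logb_self_eq_one one_lt_two, mul_one]

theorem exists_almostDisjoint_logb_logb {η : ℝ} (hη : 0 < η) (hη1 : η < 1) (M : ℕ) :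
    ∃ (M₁ : ℕ) (A : Fin M₁ → Finset (Fin M)), AlmostDisjoint η A ∧
      Real.logb 2 M - (⌈2 / η⌉₊ + 1) ≤ Real.logb 2 (Real.logb 2 M₁) := by
  set s := ⌈2 / η⌉₊
  rcases lt_or_ge M (2 ^ (s + 1)) with hM | hM
  -- the empty family will do, since `Real.logb 2 0 = 0`
  · refine ⟨0, Fin.elim0, ⟨fun i => i.elim0, fun i => i.elim0⟩, ?_⟩
    have hlogM : Real.logb 2 M ≤ s + 1 := by
      rcases M.eq_zero_or_pos with rfl | hM0
      · simp only [CharP.cast_eq_zero, Real.logb_zero]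
        positivity
      · have := Real.logb_le_logb_of_le one_lt_two (by positivity)
          (by exact_mod_cast hM.le : (M : ℝ) ≤ (2 : ℝ) ^ (s + 1))
        rwa [logb_two_pow, Nat.cast_succ] at this
    simp only [CharP.cast_eq_zero, Real.logb_zero]
    linarith
  · set n := M / 2 ^ s
    have hn : 0 < n := Nat.div_pos ((Nat.pow_le_pow_right two_pos s.le_succ).trans hM)
      (Nat.two_pow_pos s)
    obtain ⟨M₁, A, hA, hM₁⟩ := exists_almostDisjoint_graphs hη hη1 hn (Nat.le_ceil _)
    have hnM : n * 2 ^ s ≤ M := Nat.div_mul_le_self M _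
    refine ⟨M₁, fun a => (A a).map (finProdFinEquiv.toEmbedding.trans (Fin.castLEEmb hnM)),
      hA.map _, ?_⟩
    have hn0 : (0 : ℝ) < n := by exact_mod_cast hn
    have hlogM : Real.logb 2 M ≤ s + 1 + Real.logb 2 n := by
      have hM2n : M ≤ 2 ^ (s + 1) * n := by
        have : M < n * 2 ^ s + 2 ^ s := Nat.lt_div_mul_add (Nat.two_pow_pos s)
        rw [pow_succ]
        nlinarith
      have hM0 : (0 : ℝ) < M := by exact_mod_cast (Nat.two_pow_pos _).trans_le hM
      have := Real.logb_le_logb_of_le one_lt_two hM0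
        (by exact_mod_cast hM2n : (M : ℝ) ≤ (2 : ℝ) ^ (s + 1) * n)
      rwa [Real.logb_mul (by positivity) hn0.ne', logb_two_pow, Nat.cast_succ] at this
    have hlogn : Real.logb 2 n ≤ Real.logb 2 (Real.logb 2 M₁) := by
      refine Real.logb_le_logb_of_le one_lt_two hn0 ?_
      rw [← logb_two_pow n]
      exact Real.logb_le_logb_of_le one_lt_two (by positivity) (by exact_mod_cast hM₁)
    linarith

lemma sub_le_div_of_sub_half_le_div {R δ c x y k : ℝ} (hk : 0 ≤ k) (hx : R - δ / 2 ≤ x / k)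
    (hxy : x - c ≤ y) (hc : c / k ≤ δ / 2) : R - δ ≤ y / k :=
  calc R - δ ≤ x / k - c / k := by linarith
    _ = (x - c) / k := sub_div x c k |>.symm
    _ ≤ y / k := div_le_div_of_nonneg_right hxy hk

/-- **Achievability.**  For any CCQ channel family (not necessarily discrete and
memoryless), every transmission rate pair achievable with stochastic encoders is an
achievable simultaneous identification rate pair: `C_st(𝐖) ⊆ C_id^sim(𝐖)`. -/
theorem Cst_subset_CidSim {X Y : Type} [Fintype X] [Fintype Y] (d : ℕ)
    (W : (k : ℕ) → (Fin k → X) → (Fin k → Y) →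
      Matrix (Fin k → Fin d) (Fin k → Fin d) ℂ)
    (hW : ∀ k x y, (W k x y).PosSemidef ∧ (W k x y).trace = 1) :
    Cst d W ⊆ CidSim d W := by
  rintro ⟨R₁, R₂⟩ ⟨hR₁, hR₂, hach⟩
  refine ⟨hR₁, hR₂, fun ε₁ hε₁ ε₂ hε₂ δ hδ => ?_⟩
  set η := min (ε₂ / 2) (1 / 2)
  have hη : 0 < η := by positivity
  have hη1 : η < 1 := (min_le_right _ _).trans_lt (by norm_num)
  set c : ℝ := ⌈2 / η⌉₊ + 1
  obtain ⟨k₀, hk₀⟩ := hach (min ε₁ (ε₂ / 2)) (by positivity) (δ / 2) (half_pos hδ)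
  refine ⟨max k₀ ⌈2 * c / δ⌉₊, fun k hk => ?_⟩
  have hc : c / k ≤ δ / 2 := by
    have : 2 * c / δ ≤ k := (Nat.le_ceil _).trans (by exact_mod_cast (le_max_right _ _).trans hk)
    rw [div_le_iff₀ hδ] at this
    exact div_le_of_le_mul₀ k.cast_nonneg (by positivity) (by linarith)
  obtain ⟨M, N, P, Q, D, hP, hQ, hD, hDsum, hM, hN, herr⟩ := hk₀ k ((le_max_left _ _).trans hk)
  obtain ⟨M₁, A, hA, hM₁⟩ := exists_almostDisjoint_logb_logb hη hη1 M
  obtain ⟨N₁, B, hB, hN₁⟩ := exists_almostDisjoint_logb_logb hη hη1 N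
  obtain ⟨P', Q', I, hP', hQ', hI, hsim, he₁, he₂⟩ :=
    exists_simultaneous_idCode (hW k) hP hQ hD hDsum herr hA hB
  refine ⟨M₁, N₁, P', Q', I, hP', hQ', hI, hsim,
    sub_le_div_of_sub_half_le_div k.cast_nonneg hM hM₁ hc,
    sub_le_div_of_sub_half_le_div k.cast_nonneg hN hN₁ hc,
    fun a b => (he₁ a b).trans (min_le_left _ _), fun a b a' b' hne => (he₂ a b a' b' hne).trans ?_⟩
  linarith [min_le_right ε₁ (ε₂ / 2), min_le_left (ε₂ / 2) (1 / 2)]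
end

section
/- Let M ∈ ℕ with M ≥ 1, let ε ∈ (0,1), and let λ > 0 satisfy ε·log₂(1/λ − 1) > 2. Then there exist N ∈ ℕ with N ≥ (1/M)·2^{⌊λM⌋} and pairwise distinct subsets A_1, ..., A_N of {1, ..., M} such that |A_i| = ⌊λM⌋ for every i ∈ [N], and |A_i ∩ A_j| ≤ ε·⌊λM⌋ for all i, j ∈ [N] with i ≠ j. -/
/-!
Take a maximal family `F` of `k`-subsets of an `n`-set whose pairwise intersections have fewer
than `s` elements. By maximality every `k`-set `B` meets some member `A ∈ F` in at least `s`
points, and such a `B` is fixed by an `s`-subset of `A` together with `k - s` further points, so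
`C(n, k) ≤ |F| · 2^k · C(n, k - s)`. When `c k ≤ n - k`, the ratios `C(n, j + 1) / C(n, j)` for
`j < k` are at least `c`, so `C(n, k) ≥ c^s · C(n, k - s)`; with `c = 1/λ - 1`,
`s = ⌊εk⌋ + 1` and `ε log₂ c > 2` this gives `c^s ≥ 4^k`, hence `|F| ≥ 2^k`.
-/

open Finset

theorem Finset.exists_subset_pairwise_not_and_exists_of_notMem {β : Type*} (S : Finset β)
    (r : β → β → Prop) (hr : ∀ a b, r a b → r b a) :
    ∃ F ⊆ S, (F : Set β).Pairwise (fun a b => ¬ r a b) ∧ ∀ b ∈ S, b ∉ F → ∃ a ∈ F, r a b := by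
  classical
  obtain ⟨F, hF, hmax⟩ :=
    (S.powerset.filter fun F : Finset β => (F : Set β).Pairwise fun a b => ¬ r a b).exists_max_image
      card ⟨∅, by simp⟩
  rw [mem_filter, mem_powerset] at hF
  refine ⟨F, hF.1, hF.2, fun b hb hbF => ?_⟩
  by_contra! hfar
  have hins := hmax (insert b F) <| mem_filter.2 ⟨mem_powerset.2 (insert_subset hb hF.1), by
    rw [coe_insert]
    exact hF.2.insert_of_notMem hbF fun a ha => ⟨fun h => hfar a ha (hr _ _ h), hfar a ha⟩⟩
  rw [card_insert_of_notMem hbF] at hins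
  omega

section Counting

variable {α : Type*} [Fintype α] [DecidableEq α]

theorem card_powersetCard_filter_superset_le (T : Finset α) (k : ℕ) :
    #{B ∈ powersetCard k (univ : Finset α) | T ⊆ B} ≤ (Fintype.card α).choose (k - #T) := by
  rw [← card_univ, ← card_powersetCard]
  refine card_le_card_of_injOn (· \ T) (fun B hB => ?_) (fun B hB B' hB' h => ?_)
  · simp only [coe_filter, mem_powersetCard_univ, Set.mem_ofPred_eq] at hB
    simp [card_sdiff_of_subset hB.2, hB.1]
  · simp only [coe_filter, mem_powersetCard_univ, Set.mem_ofPred_eq] at hB hB'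
    rw [← sdiff_union_of_subset hB.2, ← sdiff_union_of_subset hB'.2]
    exact congrArg (· ∪ T) h

theorem card_powersetCard_filter_le_card_inter_le (A : Finset α) (k s : ℕ) :
    #{B ∈ powersetCard k (univ : Finset α) | s ≤ #(A ∩ B)} ≤
      (#A).choose s * (Fintype.card α).choose (k - s) := by
  calc #{B ∈ powersetCard k (univ : Finset α) | s ≤ #(A ∩ B)}
      ≤ #((powersetCard s A).biUnion fun T => {B ∈ powersetCard k univ | T ⊆ B}) := by
        refine card_le_card fun B hB => ?_
        rw [mem_filter] at hB
        obtain ⟨T, hT, hTcard⟩ := exists_subset_card_eq hB.2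
        exact mem_biUnion.2 ⟨T, mem_powersetCard.2 ⟨hT.trans inter_subset_left, hTcard⟩,
          mem_filter.2 ⟨hB.1, hT.trans inter_subset_right⟩⟩
    _ ≤ ∑ T ∈ powersetCard s A, #{B ∈ powersetCard k univ | T ⊆ B} := card_biUnion_le
    _ ≤ ∑ _T ∈ powersetCard s A, (Fintype.card α).choose (k - s) := sum_le_sum fun T hT => by
        simpa [(mem_powersetCard.1 hT).2] using card_powersetCard_filter_superset_le T k
    _ = _ := by rw [sum_const, card_powersetCard, smul_eq_mul]

end Counting

theorem Nat.mul_choose_le_choose_succ {n j : ℕ} {c : ℝ} (hc : 0 ≤ c)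
    (h : c * (j + 1) ≤ n - j) : c * n.choose j ≤ n.choose (j + 1) := by
  have hjn : j ≤ n := by
    by_contra! hnj
    have : (n : ℝ) < j := by exact_mod_cast hnj
    nlinarith
  have hrec : (n.choose (j + 1) : ℝ) * (j + 1) = n.choose j * (n - j) := by
    exact_mod_cast Nat.choose_succ_right_eq n j
  refine le_of_mul_le_mul_right ?_ (by positivity : (0 : ℝ) < j + 1)
  calc c * n.choose j * (j + 1) = n.choose j * (c * (j + 1)) := by ring
    _ ≤ n.choose j * (n - j) := mul_le_mul_of_nonneg_left h (by positivity)
    _ = n.choose (j + 1) * (j + 1) := hrec.symm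

theorem Nat.pow_mul_choose_le_choose_add {n k j s : ℕ} {c : ℝ} (hc : 0 ≤ c)
    (hck : c * k ≤ n - k) (hjs : j + s ≤ k) : c ^ s * n.choose j ≤ n.choose (j + s) := by
  induction s generalizing j with
  | zero => simp
  | succ s ih =>
    have hstep : c * n.choose j ≤ n.choose (j + 1) := by
      refine Nat.mul_choose_le_choose_succ hc ?_
      have hj : (j : ℝ) + 1 ≤ k := by exact_mod_cast (by omega : j + 1 ≤ k)
      nlinarith
    calc c ^ (s + 1) * n.choose j = c ^ s * (c * n.choose j) := by ring
      _ ≤ c ^ s * n.choose (j + 1) := mul_le_mul_of_nonneg_left hstep (by positivity)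
      _ ≤ n.choose (j + 1 + s) := ih (by omega)
      _ = n.choose (j + (s + 1)) := by rw [add_assoc, add_comm 1 s]

theorem exists_powersetCard_pairwise_card_inter_lt_choose_le {α : Type*} [Fintype α]
    [DecidableEq α] {k s : ℕ} (hsk : s ≤ k) :
    ∃ F ⊆ powersetCard k (univ : Finset α),
      (F : Set (Finset α)).Pairwise (fun A B => #(A ∩ B) < s) ∧
      (Fintype.card α).choose k ≤ #F * (k.choose s * (Fintype.card α).choose (k - s)) := by
  set S := powersetCard k (univ : Finset α)
  obtain ⟨F, hFS, hF, hnear⟩ := S.exists_subset_pairwise_not_and_exists_of_notMem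
    (fun A B => s ≤ #(A ∩ B)) fun A B h => by rwa [inter_comm]
  refine ⟨F, hFS, hF.mono' fun A B h => not_le.1 h, ?_⟩
  have hcover : S ⊆ F.biUnion fun A => {B ∈ S | s ≤ #(A ∩ B)} := fun B hB => by
    rw [mem_biUnion]
    by_cases hBF : B ∈ F
    · exact ⟨B, hBF, mem_filter.2 ⟨hB, by rwa [inter_self, mem_powersetCard_univ.1 hB]⟩⟩
    · obtain ⟨A, hA, hAB⟩ := hnear B hB hBF
      exact ⟨A, hA, mem_filter.2 ⟨hB, hAB⟩⟩
  calc (Fintype.card α).choose k = #S := by rw [card_powersetCard, card_univ]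
    _ ≤ ∑ A ∈ F, #{B ∈ S | s ≤ #(A ∩ B)} := (card_le_card hcover).trans card_biUnion_le
    _ ≤ ∑ _A ∈ F, k.choose s * (Fintype.card α).choose (k - s) := sum_le_sum fun A hA => by
        simpa [mem_powersetCard_univ.1 (hFS hA)] using
          card_powersetCard_filter_le_card_inter_le A k s
    _ = #F * (k.choose s * (Fintype.card α).choose (k - s)) := by rw [sum_const, smul_eq_mul]

theorem exists_powersetCard_pairwise_card_inter_lt {α : Type*} [Fintype α] [DecidableEq α]
    {k s : ℕ} {c : ℝ} (hsk : s ≤ k) (hc : 0 ≤ c) (hck : c * k ≤ Fintype.card α - k)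
    (hcs : 4 ^ k ≤ c ^ s) :
    ∃ F ⊆ powersetCard k (univ : Finset α),
      (F : Set (Finset α)).Pairwise (fun A B => #(A ∩ B) < s) ∧ 2 ^ k ≤ #F := by
  set n := Fintype.card α
  obtain ⟨F, hFS, hF, hupper⟩ := exists_powersetCard_pairwise_card_inter_lt_choose_le (α := α) hsk
  refine ⟨F, hFS, hF, ?_⟩
  have hlower : (4 : ℝ) ^ k * n.choose (k - s) ≤ n.choose k := by
    calc (4 : ℝ) ^ k * n.choose (k - s) ≤ c ^ s * n.choose (k - s) := by gcongr
      _ ≤ n.choose (k - s + s) := Nat.pow_mul_choose_le_choose_add hc hck (by omega)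
      _ = n.choose k := by rw [Nat.sub_add_cancel hsk]
  have hupper' : (n.choose k : ℝ) ≤ #F * (2 ^ k * n.choose (k - s)) := by
    have := hupper.trans (Nat.mul_le_mul_left _ (Nat.mul_le_mul_right _ (Nat.choose_le_two_pow k s)))
    exact_mod_cast this
  have hkn : k ≤ n := by
    have : (k : ℝ) ≤ n := by nlinarith
    exact_mod_cast this
  have hpos : (0 : ℝ) < 2 ^ k * n.choose (k - s) := by
    have := Nat.choose_pos (n := n) (k := k - s) (by omega)
    positivity
  have : (2 : ℝ) ^ k ≤ #F := by
    refine le_of_mul_le_mul_right ?_ hpos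
    calc (2 : ℝ) ^ k * (2 ^ k * n.choose (k - s)) = 4 ^ k * n.choose (k - s) := by
          rw [← mul_assoc, ← mul_pow]; norm_num
      _ ≤ #F * (2 ^ k * n.choose (k - s)) := hlower.trans hupper'
  exact_mod_cast this

theorem Real.one_lt_of_neg_one_lt_of_logb_pos {b x : ℝ} (hb : 1 < b) (hx : -1 < x)
    (h : 0 < Real.logb b x) : 1 < x := by
  by_contra! hx1
  have := Real.logb_nonpos (b := b) hb (abs_nonneg x) (abs_le.2 ⟨hx.le, hx1⟩)
  rw [Real.logb_abs] at this
  linarith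

theorem four_pow_le_pow_of_two_lt_mul_logb {ε c : ℝ} {k s : ℕ} (hε : 0 < ε) (hc : 0 < c)
    (h : 2 < ε * Real.logb 2 c) (hs : ε * k ≤ s) : (4 : ℝ) ^ k ≤ c ^ s := by
  have hL : 0 < Real.logb 2 c := pos_of_mul_pos_right (by linarith) hε.le
  have hexp : ((2 * k : ℕ) : ℝ) ≤ Real.logb 2 c * s := by
    push_cast
    nlinarith [(Nat.cast_nonneg k : (0 : ℝ) ≤ k)]
  calc (4 : ℝ) ^ k = 2 ^ ((2 * k : ℕ) : ℝ) := by rw [Real.rpow_natCast, pow_mul]; norm_num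
    _ ≤ 2 ^ (Real.logb 2 c * s) := Real.rpow_le_rpow_of_exponent_le (by norm_num) hexp
    _ = c ^ s := by rw [Real.rpow_mul zero_le_two, Real.rpow_logb two_pos (by norm_num) hc,
        Real.rpow_natCast]

theorem exists_powersetCard_floor_pairwise_card_inter_le {α : Type*} [Fintype α] [DecidableEq α]
    {ε lam : ℝ} (hε0 : 0 < ε) (hε1 : ε < 1) (hcond : 2 < ε * Real.logb 2 (1 / lam - 1)) :
    ∃ F ⊆ powersetCard ⌊lam * Fintype.card α⌋₊ (univ : Finset α),
      (F : Set (Finset α)).Pairwise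
        (fun A B => (#(A ∩ B) : ℝ) ≤ ε * ⌊lam * Fintype.card α⌋₊) ∧
      2 ^ ⌊lam * Fintype.card α⌋₊ ≤ #F := by
  set n := Fintype.card α
  set k := ⌊lam * n⌋₊
  rcases Nat.eq_zero_or_pos k with hk | hk
  · exact ⟨{∅}, by simp [hk], by simp, by simp [hk]⟩
  have hlamn : 1 ≤ lam * n := (Nat.one_le_floor_iff _).1 hk
  have hlam : 0 < lam := by
    by_contra! h
    nlinarith [(Nat.cast_nonneg n : (0 : ℝ) ≤ n)]
  have hkle : (k : ℝ) ≤ lam * n := Nat.floor_le (by linarith)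
  have hkpos : (0 : ℝ) < k := by exact_mod_cast hk
  have hc : 1 < 1 / lam - 1 := Real.one_lt_of_neg_one_lt_of_logb_pos one_lt_two
    (by have := one_div_pos.2 hlam; linarith) (pos_of_mul_pos_right (by linarith) hε0.le)
  have hsk : ⌊ε * k⌋₊ + 1 ≤ k := (Nat.floor_lt (by positivity)).2 (by nlinarith)
  have hck : (1 / lam - 1) * k ≤ n - k := by
    have : k / lam ≤ n := (div_le_iff₀ hlam).2 (by linarith)
    rw [sub_mul, one_div_mul_eq_div]
    linarith
  have hcs := four_pow_le_pow_of_two_lt_mul_logb (k := k) (s := ⌊ε * k⌋₊ + 1) hε0 (by linarith)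
    hcond (by push_cast; exact (Nat.lt_floor_add_one (ε * k)).le)
  obtain ⟨F, hFk, hF, hFcard⟩ :=
    exists_powersetCard_pairwise_card_inter_lt hsk (by linarith) hck (by exact_mod_cast hcs)
  refine ⟨F, hFk, hF.mono' fun A B h => ?_, hFcard⟩
  calc (#(A ∩ B) : ℝ) ≤ ⌊ε * k⌋₊ := by exact_mod_cast Nat.lt_succ_iff.1 h
    _ ≤ ε * k := Nat.floor_le (by positivity)

theorem lober_lemma_general (M : ℕ) (ε : ℝ) (hε : ε ∈ Set.Ioo (0:ℝ) 1)
    (lam : ℝ)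
    (hcond : 2 < ε * Real.logb 2 (1 / lam - 1)) :
    ∃ (N : ℕ) (A : Fin N → Finset (Fin M)),
      ((1 : ℝ) / M) * 2 ^ (⌊lam * M⌋₊) ≤ (N : ℝ) ∧
      Function.Injective A ∧
      (∀ i, (A i).card = ⌊lam * M⌋₊) ∧
      (∀ i j, i ≠ j → ((A i ∩ A j).card : ℝ) ≤ ε * (⌊lam * M⌋₊ : ℝ)) := by
  obtain ⟨F, hFk, hF, hFcard⟩ :=
    exists_powersetCard_floor_pairwise_card_inter_le (α := Fin M) hε.1 hε.2 hcond
  rw [Fintype.card_fin] at hFk hF hFcard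
  let A : Fin #F → Finset (Fin M) := fun i => F.equivFin.symm i
  have hA : Function.Injective A := Subtype.val_injective.comp F.equivFin.symm.injective
  refine ⟨#F, A, ?_, hA, fun i => mem_powersetCard_univ.1 (hFk (F.equivFin.symm i).2),
    fun i j hij => hF (F.equivFin.symm i).2 (F.equivFin.symm j).2 (hA.ne hij)⟩
  have h2k : (2 : ℝ) ^ ⌊lam * M⌋₊ ≤ #F := by exact_mod_cast hFcard
  have hinvM : (1 : ℝ) / M ≤ 1 := by
    rcases Nat.eq_zero_or_pos M with rfl | hM
    · simp
    · exact (div_le_one (by positivity)).2 (by exact_mod_cast hM)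
  calc (1 : ℝ) / M * 2 ^ ⌊lam * M⌋₊ ≤ 1 * 2 ^ ⌊lam * M⌋₊ := by gcongr
    _ ≤ #F := by rwa [one_mul]

/-- **Löber's combinatorial lemma.** For `M ≥ 1`, `ε ∈ (0,1)` and `λ > 0` with
`ε·log₂(1/λ − 1) > 2`, there are at least `(1/M)·2^⌊λM⌋` pairwise distinct subsets
`A₁, …, A_N` of `{1,…,M}`, each of cardinality `⌊λM⌋`, whose pairwise intersections
satisfy `|Aᵢ ∩ Aⱼ| ≤ ε·⌊λM⌋` for `i ≠ j`. -/
theorem lober_lemma (M : ℕ) (hM : 1 ≤ M) (ε : ℝ) (hε : ε ∈ Set.Ioo (0:ℝ) 1)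
    (lam : ℝ) (hlam : 0 < lam)
    (hcond : 2 < ε * Real.logb 2 (1 / lam - 1)) :
    ∃ (N : ℕ) (A : Fin N → Finset (Fin M)),
      ((1 : ℝ) / M) * 2 ^ (⌊lam * M⌋₊) ≤ (N : ℝ) ∧
      Function.Injective A ∧
      (∀ i, (A i).card = ⌊lam * M⌋₊) ∧
      (∀ i j, i ≠ j → ((A i ∩ A j).card : ℝ) ≤ ε * (⌊lam * M⌋₊ : ℝ)) :=
  lober_lemma_general M ε hε lam hcond
end

section
/- One-shot construction of a simultaneous ID-code from a transmission code: let X, Y be finite sets, d ∈ ℕ, and ρ : X × Y → S(ℂ^d) a map into density matrices. Let ε_1, ε_2 ∈ (0,1), set ε := min{ε_1, ε_2/4}, and let λ > 0 satisfy ε·log₂(1/λ − 1) > 2. Suppose (P_i, Q_j, D_{ij})_{i∈[M], j∈[N]} is a code where each P_i is a probability distribution on X, each Q_j is a probability distribution on Y, the D_{ij} are positive semidefinite with Σ_{i,j} D_{ij} = 𝟙, and for all i ∈ [M], j ∈ [N]: Σ_{x,y} P_i(x)Q_j(y) tr(D_{ij} ρ(x,y)) ≥ 1 − ε. Then there exist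 M' ≥ (1/M)·2^{⌊λM⌋} and N' ≥ (1/N)·2^{⌊λN⌋}, subsets A_1,...,A_{M'} ⊆ [M] and B_1,...,B_{N'} ⊆ [N], probability distributions P'_m := (1/|A_m|) Σ_{i∈A_m} P_i on X and Q'_n := (1/|B_n|) Σ_{j∈B_n} Q_j on Y, and operators I_{mn} := Σ_{i∈A_m} Σ_{j∈B_n} D_{ij}, such that: (a) for all m ∈ [M'], n ∈ [N']: 1 − Σ_{x,y} P'_m(x)Q'_n(y) tr(I_{mn} ρ(x,y)) ≤ ε_1; and (b) for all (m,n) ≠ (a,b) with m,a ∈ [M'], n,b ∈ [N']: Σ_{x,y} P'_m(x)Q'_n(y) tr(I_{ab} ρ(x,y)) ≤ ε_2. -/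
open Matrix BigOperators
open scoped ComplexOrder

/-- A density matrix: positive semidefinite with trace one. -/
def IsDensityMatrix {d : ℕ} (ρ : Matrix (Fin d) (Fin d) ℂ) : Prop :=
  ρ.PosSemidef ∧ ρ.trace = 1

/-!
Sender `m` encodes by a uniformly random `i ∈ A m`, sender `n` by a random `j ∈ B n`, and the
receiver accepts `(a, b)` when the transmission decoder outputs a pair in `A a × B b`. For the
row-stochastic decoding matrix `W` of the transmission code, whose diagonal is `≥ 1 - ε`, the
`S`-averaged mass that `W` puts on `T` is at least `1 - ε` when `T = S` and at most
`ε + |S ∩ T| / |S|` in general. With `S = A m × B n`, `T = A a × B b`, both error bounds follow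
once distinct sets of each family overlap in at most an `ε`-fraction.

Such a family of `k`-sets, `k = ⌊λM⌋`, is a maximal family with pairwise intersections
`< s = ⌈εk⌉`. By maximality every `k`-set meets some member in `≥ s` points, so
`C(M, k) ≤ |F| · C(k, s) · C(M, k - s)`. Since `k ≤ λM`, consecutive binomial coefficients below
`k` grow by a factor `≥ 1/λ - 1`, so `C(M, k) ≥ (1/λ - 1)^s · C(M, k - s) ≥ 4^k · C(M, k - s)`, the
last step by `ε · log₂ (1/λ - 1) > 2`. Hence `|F| ≥ 2^k`.
-/

open Finset

theorem Matrix.PosSemidef.re_trace_mul_nonneg {n 𝕜 : Type*} [Fintype n] [DecidableEq n] [RCLike 𝕜]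
    {A B : Matrix n n 𝕜} (hA : A.PosSemidef) (hB : B.PosSemidef) :
    0 ≤ RCLike.re (A * B).trace := by
  open scoped MatrixOrder in
  obtain ⟨C, rfl⟩ := CStarAlgebra.nonneg_iff_eq_star_mul_self.mp hB.nonneg
  rw [star_eq_conjTranspose, ← Matrix.mul_assoc, trace_mul_comm, ← Matrix.mul_assoc]
  exact (RCLike.nonneg_iff.mp (hA.mul_mul_conjTranspose_same C).trace_nonneg).1

theorem IsProbDist.mixture {α : Type} {ι : Type*} [Fintype α] {P : ι → α → ℝ}
    (hP : ∀ i, IsProbDist (P i)) {S : Finset ι} (hS : S.Nonempty) :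
    IsProbDist (fun x => ((1 : ℝ) / #S) * ∑ i ∈ S, P i x) := by
  refine ⟨fun x => mul_nonneg (by positivity) (sum_nonneg fun i _ => (hP i).1 x), ?_⟩
  rw [← mul_sum, sum_comm, sum_congr rfl fun i _ => (hP i).2, sum_const, nsmul_one]
  have : (#S : ℝ) ≠ 0 := by exact_mod_cast hS.card_ne_zero
  field_simp

section Stochastic

variable {ι : Type*} {W : ι → ι → ℝ} {ε : ℝ}

theorem one_sub_le_inv_card_mul_sum_sum (hW0 : ∀ p q, 0 ≤ W p q) (hdiag : ∀ p, 1 - ε ≤ W p p)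
    {S : Finset ι} (hS : S.Nonempty) : 1 - ε ≤ (#S : ℝ)⁻¹ * ∑ p ∈ S, ∑ q ∈ S, W p q := by
  rw [le_inv_mul_iff₀ (by exact_mod_cast hS.card_pos)]
  calc #S * (1 - ε) = ∑ p ∈ S, (1 - ε) := by rw [sum_const, nsmul_eq_mul]
    _ ≤ ∑ p ∈ S, ∑ q ∈ S, W p q :=
        sum_le_sum fun p hp => (hdiag p).trans (single_le_sum (fun q _ => hW0 p q) hp)

variable [Fintype ι] [DecidableEq ι]

theorem sum_le_add_ite_mem (hW0 : ∀ p q, 0 ≤ W p q) (hW1 : ∀ p, ∑ q, W p q = 1)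
    {p : ι} (hp : 1 - ε ≤ W p p) (T : Finset ι) :
    ∑ q ∈ T, W p q ≤ ε + if p ∈ T then 1 else 0 := by
  have := sum_le_univ_sum_of_nonneg (s := insert p T) (fun q => hW0 p q)
  split_ifs with h
  · rw [insert_eq_of_mem h, hW1] at this
    linarith [single_le_sum (fun q _ => hW0 p q) h]
  · rw [sum_insert h, hW1] at this
    linarith

theorem inv_card_mul_sum_sum_le (hW0 : ∀ p q, 0 ≤ W p q) (hW1 : ∀ p, ∑ q, W p q = 1)
    (hdiag : ∀ p, 1 - ε ≤ W p p) {S : Finset ι} (hS : S.Nonempty) (T : Finset ι) :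
    (#S : ℝ)⁻¹ * ∑ p ∈ S, ∑ q ∈ T, W p q ≤ ε + #(S ∩ T) / #S := by
  have hS0 : (0 : ℝ) < #S := by exact_mod_cast hS.card_pos
  rw [inv_mul_le_iff₀ hS0, mul_add, mul_div_cancel₀ _ hS0.ne']
  calc ∑ p ∈ S, ∑ q ∈ T, W p q ≤ ∑ p ∈ S, (ε + if p ∈ T then 1 else 0) :=
        sum_le_sum fun p _ => sum_le_add_ite_mem hW0 hW1 (hdiag p) T
    _ = #S * ε + #(S ∩ T) := by
        rw [sum_add_distrib, sum_const, sum_boole, filter_mem_eq_inter, nsmul_eq_mul]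

end Stochastic

section Packing

variable {α : Type*} [Fintype α] [DecidableEq α]

theorem exists_packing_covering (k : ℕ) {s : ℕ} (hsk : s ≤ k) :
    ∃ F : Finset (Finset α), (∀ A ∈ F, #A = k) ∧
      (F : Set (Finset α)).Pairwise (fun A B => #(A ∩ B) < s) ∧
      ∀ B : Finset α, #B = k → ∃ A ∈ F, s ≤ #(A ∩ B) := by
  classical
  let IsPacking : Finset (Finset α) → Prop := fun F =>
    (∀ A ∈ F, #A = k) ∧ (F : Set (Finset α)).Pairwise (fun A B => #(A ∩ B) < s)
  obtain ⟨F, hF, hmax⟩ := exists_max_image {F | IsPacking F} card ⟨∅, by simp [IsPacking]⟩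
  obtain ⟨-, hFk, hFpair⟩ := mem_filter.mp hF
  refine ⟨F, hFk, hFpair, fun B hB => ?_⟩
  by_contra! hfar
  have hBF : B ∉ F := fun hBF => by simpa [hB] using (hfar B hBF).trans_le hsk
  have hpack : IsPacking (insert B F) := by
    refine ⟨(forall_mem_insert _ _ _).mpr ⟨hB, hFk⟩, ?_⟩
    rw [coe_insert]
    exact hFpair.insert fun A hA _ => ⟨by simpa [inter_comm] using hfar A hA, hfar A hA⟩
  have := hmax _ (mem_filter.mpr ⟨mem_univ _, hpack⟩)
  rw [card_insert_of_notMem hBF] at this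
  omega

theorem card_filter_inter_le (A : Finset α) (k s : ℕ) :
    #{B ∈ powersetCard k univ | s ≤ #(A ∩ B)} ≤
      (#A).choose s * (Fintype.card α).choose (k - s) := by
  calc #{B ∈ powersetCard k univ | s ≤ #(A ∩ B)}
      ≤ #((powersetCard s A ×ˢ powersetCard (k - s) univ).image fun p => p.1 ∪ p.2) := by
        refine card_le_card fun B hB => ?_
        obtain ⟨hBk, hs⟩ := mem_filter.mp hB
        obtain ⟨C, hCAB, hC⟩ := exists_subset_card_eq hs
        have hCB : C ⊆ B := hCAB.trans inter_subset_right
        refine mem_image.mpr ⟨(C, B \ C), mem_product.mpr ⟨?_, ?_⟩, union_sdiff_of_subset hCB⟩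
        · exact mem_powersetCard.mpr ⟨hCAB.trans inter_subset_left, hC⟩
        · rw [mem_powersetCard_univ, card_sdiff_of_subset hCB, hC, (mem_powersetCard_univ.mp hBk)]
    _ ≤ (#A).choose s * (Fintype.card α).choose (k - s) := by
        refine card_image_le.trans_eq ?_
        rw [card_product, card_powersetCard, card_powersetCard, card_univ]

theorem choose_le_card_mul_of_covering {F : Finset (Finset α)} {k s : ℕ}
    (hFk : ∀ A ∈ F, #A = k) (hcover : ∀ B : Finset α, #B = k → ∃ A ∈ F, s ≤ #(A ∩ B)) :
    (Fintype.card α).choose k ≤ #F * (k.choose s * (Fintype.card α).choose (k - s)) := by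
  calc (Fintype.card α).choose k = #(powersetCard k (univ : Finset α)) := by
        rw [card_powersetCard, card_univ]
    _ ≤ #(F.biUnion fun A => {B ∈ powersetCard k univ | s ≤ #(A ∩ B)}) := by
        refine card_le_card fun B hB => ?_
        obtain ⟨A, hA, hAB⟩ := hcover B (mem_powersetCard_univ.mp hB)
        exact mem_biUnion.mpr ⟨A, hA, mem_filter.mpr ⟨hB, hAB⟩⟩
    _ ≤ ∑ A ∈ F, #{B ∈ powersetCard k univ | s ≤ #(A ∩ B)} := card_biUnion_le
    _ ≤ ∑ _A ∈ F, k.choose s * (Fintype.card α).choose (k - s) :=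
        sum_le_sum fun A hA => hFk A hA ▸ card_filter_inter_le A k s
    _ = #F * (k.choose s * (Fintype.card α).choose (k - s)) := by rw [sum_const, smul_eq_mul]

end Packing

theorem pow_mul_le_of_mul_le_succ {f : ℕ → ℝ} {r : ℝ} (hr : 0 ≤ r) {k : ℕ}
    (hf : ∀ j < k, r * f j ≤ f (j + 1)) {i j : ℕ} (hij : i ≤ j) (hjk : j ≤ k) :
    r ^ (j - i) * f i ≤ f j := by
  induction j, hij using Nat.le_induction with
  | base => simp
  | succ j hij ih =>
    calc r ^ (j + 1 - i) * f i = r * (r ^ (j - i) * f i) := by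
          rw [Nat.sub_add_comm hij, pow_succ]; ring
      _ ≤ r * f j := mul_le_mul_of_nonneg_left (ih (by omega)) hr
      _ ≤ f (j + 1) := hf j (by omega)

theorem mul_choose_le_choose_succ {r : ℝ} (hr : 0 ≤ r) {n k j : ℕ} (hrk : r * k ≤ n - k)
    (hj : j < k) : r * n.choose j ≤ n.choose (j + 1) := by
  have hkn : k ≤ n := by exact_mod_cast (show (k : ℝ) ≤ n by nlinarith)
  have hrec : (n.choose (j + 1) : ℝ) * (j + 1) = n.choose j * (n - j) := by
    rw [← Nat.cast_sub (by omega)]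
    exact_mod_cast Nat.choose_succ_right_eq n j
  have hjk : (j : ℝ) + 1 ≤ k := by exact_mod_cast hj
  refine le_of_mul_le_mul_right ?_ (by positivity : (0 : ℝ) < j + 1)
  rw [hrec, mul_assoc, mul_comm (r : ℝ), mul_assoc]
  refine mul_le_mul_of_nonneg_left ?_ (Nat.cast_nonneg _)
  nlinarith

theorem four_pow_le_pow_ceil {r ε : ℝ} (hε : 0 ≤ ε) (hr : 0 < r) (h : 2 < ε * Real.logb 2 r)
    (k : ℕ) : (4 : ℝ) ^ k ≤ r ^ ⌈ε * k⌉₊ := by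
  have hL : 0 < Real.logb 2 r := pos_of_mul_pos_right (by linarith) hε
  have hr1 : 1 ≤ r := ((Real.logb_pos_iff one_lt_two hr).mp hL).le
  calc (4 : ℝ) ^ k = 2 ^ ((2 * k : ℕ) : ℝ) := by
        rw [Real.rpow_natCast, pow_mul]; norm_num
    _ ≤ 2 ^ (Real.logb 2 r * (ε * k)) := by
        refine Real.rpow_le_rpow_of_exponent_le one_le_two ?_
        push_cast
        nlinarith [(Nat.cast_nonneg k : (0 : ℝ) ≤ k)]
    _ = r ^ (ε * k) := by rw [Real.rpow_mul zero_le_two, Real.rpow_logb two_pos (by norm_num) hr]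
    _ ≤ r ^ (⌈ε * k⌉₊ : ℝ) := Real.rpow_le_rpow_of_exponent_le hr1 (Nat.le_ceil _)
    _ = r ^ ⌈ε * k⌉₊ := Real.rpow_natCast _ _

theorem one_lt_of_logb_pos {b r : ℝ} (hb : 1 < b) (hr : -1 < r) (h : 0 < Real.logb b r) :
    1 < r := by
  have hr0 : r ≠ 0 := by rintro rfl; simp at h
  rw [← Real.logb_abs, Real.logb_pos_iff hb (abs_pos.mpr hr0)] at h
  rcases lt_abs.mp h with h | h
  · exact h
  · linarith

theorem exists_large_packing (α : Type*) [Fintype α] [DecidableEq α] {k s : ℕ} (hsk : s ≤ k)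
    {r : ℝ} (hr : 0 ≤ r) (hrk : r * k ≤ Fintype.card α - k) (hrs : (4 : ℝ) ^ k ≤ r ^ s) :
    ∃ F : Finset (Finset α), (∀ A ∈ F, #A = k) ∧
      (F : Set (Finset α)).Pairwise (fun A B => #(A ∩ B) < s) ∧ (2 : ℝ) ^ k ≤ #F := by
  obtain ⟨F, hFk, hFpair, hcover⟩ := exists_packing_covering (α := α) k hsk
  refine ⟨F, hFk, hFpair, ?_⟩
  set n := Fintype.card α
  have hkn : k ≤ n := by exact_mod_cast (show (k : ℝ) ≤ n by nlinarith)
  have hpos : (0 : ℝ) < n.choose (k - s) := by exact_mod_cast Nat.choose_pos (by omega)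
  have hratio : r ^ s * n.choose (k - s) ≤ n.choose k := by
    simpa [Nat.sub_sub_self hsk] using pow_mul_le_of_mul_le_succ (f := fun j => (n.choose j : ℝ))
      hr (fun j hj => mul_choose_le_choose_succ hr hrk hj) (Nat.sub_le k s) le_rfl
  have hcount : (n.choose k : ℝ) ≤ #F * (k.choose s * n.choose (k - s)) := by
    exact_mod_cast choose_le_card_mul_of_covering hFk hcover
  have hks : (k.choose s : ℝ) ≤ 2 ^ k := by exact_mod_cast Nat.choose_le_two_pow k s
  have : (2 : ℝ) ^ k * 2 ^ k * n.choose (k - s) ≤ #F * 2 ^ k * n.choose (k - s) :=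
    calc (2 : ℝ) ^ k * 2 ^ k * n.choose (k - s) = 4 ^ k * n.choose (k - s) := by
          rw [← mul_pow]; norm_num
      _ ≤ #F * (k.choose s * n.choose (k - s)) :=
          ((mul_le_mul_of_nonneg_right hrs hpos.le).trans hratio).trans hcount
      _ ≤ #F * 2 ^ k * n.choose (k - s) := by
          rw [mul_assoc]; gcongr
  exact le_of_mul_le_mul_right (le_of_mul_le_mul_right this hpos) (by positivity)

theorem exists_large_family_small_inter (M : ℕ) {ε lam : ℝ} (hε0 : 0 < ε) (hε1 : ε ≤ 1)
    (hlam : 0 < lam) (hcond : 2 < ε * Real.logb 2 (1 / lam - 1)) :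
    ∃ (M' : ℕ) (A : Fin M' → Finset (Fin M)), (1 : ℝ) / M * 2 ^ ⌊lam * M⌋₊ ≤ M' ∧
      (∀ m, (A m).Nonempty) ∧ ∀ m a, m ≠ a → (#(A m ∩ A a) : ℝ) ≤ ε * #(A m) := by
  set k := ⌊lam * M⌋₊
  rcases Nat.eq_zero_or_pos k with hk | hk
  · refine ⟨M, fun m => {m}, ?_, fun m => singleton_nonempty m, fun m a hma => ?_⟩
    · rcases Nat.eq_zero_or_pos M with hM | hM
      · simp [hM]
      · have : (1 : ℝ) ≤ M := by exact_mod_cast hM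
        rw [hk, pow_zero, mul_one, div_le_iff₀ (by positivity)]
        nlinarith
    · simp [hma, hε0.le]
  set r := 1 / lam - 1
  set s := ⌈ε * k⌉₊
  have hkM : (k : ℝ) ≤ lam * M := Nat.floor_le (by positivity)
  have hM : (1 : ℝ) ≤ M := by
    have hM0 : M ≠ 0 := by rintro rfl; simp [k] at hk
    exact_mod_cast Nat.one_le_iff_ne_zero.mpr hM0
  have hr : 1 < r := one_lt_of_logb_pos one_lt_two
    (by simp only [r]; linarith [one_div_pos.mpr hlam])
    (pos_of_mul_pos_right (by linarith) hε0.le)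
  have hrk : r * k ≤ Fintype.card (Fin M) - k := by
    have : 1 / lam * k ≤ M := by rw [one_div_mul_eq_div, div_le_iff₀ hlam]; linarith
    rw [Fintype.card_fin, sub_mul, one_mul]
    linarith
  have hsk : s ≤ k := Nat.ceil_le.mpr (by nlinarith [(Nat.cast_nonneg k : (0 : ℝ) ≤ k)])
  obtain ⟨F, hFk, hFpair, hFcard⟩ := exists_large_packing (Fin M) hsk (by linarith) hrk
    (four_pow_le_pow_ceil hε0.le (by linarith) hcond k)
  refine ⟨#F, fun m => F.equivFin.symm m, ?_, fun m => ?_, fun m a hma => ?_⟩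
  · calc (1 : ℝ) / M * 2 ^ k ≤ 2 ^ k := by
          rw [div_mul_eq_mul_div, one_mul, div_le_iff₀ (by positivity)]
          nlinarith [pow_pos (two_pos : (0 : ℝ) < 2) k]
      _ ≤ #F := hFcard
  · rw [← card_pos, hFk _ (F.equivFin.symm m).2]
    exact hk
  · have hne := Subtype.val_injective.ne (F.equivFin.symm.injective.ne hma)
    rw [hFk _ (F.equivFin.symm m).2]
    exact (Nat.lt_ceil.mp (hFpair (F.equivFin.symm m).2 (F.equivFin.symm a).2 hne)).le

theorem card_inter_product_le {α β : Type*} [DecidableEq α] [DecidableEq β] {ε : ℝ}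
    {A A' : Finset α} {B B' : Finset β}
    (h : (#(A ∩ A') : ℝ) ≤ ε * #A ∨ (#(B ∩ B') : ℝ) ≤ ε * #B) :
    (#((A ×ˢ B) ∩ (A' ×ˢ B')) : ℝ) ≤ ε * #(A ×ˢ B) := by
  have hA : (#(A ∩ A') : ℝ) ≤ #A := by exact_mod_cast card_le_card inter_subset_left
  have hB : (#(B ∩ B') : ℝ) ≤ #B := by exact_mod_cast card_le_card inter_subset_left
  rw [product_inter_product, card_product, card_product, Nat.cast_mul, Nat.cast_mul]
  rcases h with h | h <;>
    nlinarith [(#(A ∩ A')).cast_nonneg (α := ℝ), (#(B ∩ B')).cast_nonneg (α := ℝ)]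

section Code

variable {X Y : Type} {ι κ n : Type*} [Fintype X] [Fintype Y] [Fintype n]

def decodingProb (P : ι → X → ℝ) (Q : κ → Y → ℝ) (D : ι → κ → Matrix n n ℂ)
    (ρ : X → Y → Matrix n n ℂ) (p q : ι × κ) : ℝ :=
  ∑ x, ∑ y, P p.1 x * Q p.2 y * ((D q.1 q.2 * ρ x y).trace).re

variable (P : ι → X → ℝ) (Q : κ → Y → ℝ) (D : ι → κ → Matrix n n ℂ) (ρ : X → Y → Matrix n n ℂ)

theorem sum_mixture_trace_eq (c c' : ℝ) (A A' : Finset ι) (B B' : Finset κ) :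
    ∑ x, ∑ y, (c * ∑ i ∈ A, P i x) * (c' * ∑ j ∈ B, Q j y) *
      (((∑ a ∈ A', ∑ b ∈ B', D a b) * ρ x y).trace).re
    = c * c' * ∑ p ∈ A ×ˢ B, ∑ q ∈ A' ×ˢ B', decodingProb P Q D ρ p q := by
  have hexpand : ∑ x, ∑ y, (∑ i ∈ A, P i x) * (∑ j ∈ B, Q j y) *
      (((∑ a ∈ A', ∑ b ∈ B', D a b) * ρ x y).trace).re
      = ∑ p ∈ A ×ˢ B, ∑ q ∈ A' ×ˢ B', decodingProb P Q D ρ p q := by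
    simp only [decodingProb, sum_product, sum_mul, mul_sum, Matrix.trace_sum, Complex.re_sum]
    simp only [sum_comm (t := B')]
    simp only [sum_comm (t := A')]
    simp only [sum_comm (t := B)]
    simp only [sum_comm (t := A)]
  rw [← hexpand]
  calc _ = ∑ x, ∑ y, c * c' * ((∑ i ∈ A, P i x) * (∑ j ∈ B, Q j y) *
          (((∑ a ∈ A', ∑ b ∈ B', D a b) * ρ x y).trace).re) :=
        sum_congr rfl fun x _ => sum_congr rfl fun y _ => by ring
    _ = _ := by simp only [Finset.mul_sum]

variable {P Q D ρ}

theorem decodingProb_nonneg [DecidableEq n] (hP : ∀ i x, 0 ≤ P i x) (hQ : ∀ j y, 0 ≤ Q j y)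
    (hD : ∀ a b, (D a b).PosSemidef) (hρ : ∀ x y, (ρ x y).PosSemidef) (p q : ι × κ) :
    0 ≤ decodingProb P Q D ρ p q :=
  sum_nonneg fun x _ => sum_nonneg fun y _ => mul_nonneg (mul_nonneg (hP _ x) (hQ _ y))
    ((hD _ _).re_trace_mul_nonneg (hρ x y))

theorem sum_decodingProb_eq_one [DecidableEq n] [Fintype ι] [Fintype κ]
    (hP : ∀ i, IsProbDist (P i)) (hQ : ∀ j, IsProbDist (Q j)) (hDsum : ∑ a, ∑ b, D a b = 1)
    (hρ : ∀ x y, (ρ x y).trace = 1) (p : ι × κ) :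
    ∑ q, decodingProb P Q D ρ p q = 1 := by
  have h := sum_mixture_trace_eq P Q D ρ 1 1 {p.1} univ {p.2} univ
  simp only [sum_singleton, one_mul, hDsum, hρ, Complex.one_re, mul_one, univ_product_univ,
    singleton_product_singleton, Prod.mk.eta] at h
  rw [← h, ← sum_mul_sum, (hP _).2, (hQ _).2, mul_one]

end Code

/-- **One-shot construction of a simultaneous ID-code from a transmission code.**
Given a transmission code `(P_i, Q_j, D_{ij})` with maximal error at most
`ε = min {ε₁, ε₂/4}` and `λ > 0` with `ε·log₂(1/λ − 1) > 2`, there exist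
`M' ≥ (1/M)·2^⌊λM⌋` and `N' ≥ (1/N)·2^⌊λN⌋` subsets `A_m ⊆ [M]`, `B_n ⊆ [N]` such that
the uniformly mixed encoders `P'_m`, `Q'_n` and operators `I_{mn} = ∑_{i∈A_m,j∈B_n} D_{ij}`
form an ID-code with first-kind error at most `ε₁` and second-kind error at most `ε₂`. -/
theorem one_shot_id_construction {X Y : Type} [Fintype X] [Fintype Y] {d : ℕ}
    (ρ : X → Y → Matrix (Fin d) (Fin d) ℂ)
    (hρ : ∀ x y, IsDensityMatrix (ρ x y))
    (ε₁ ε₂ : ℝ) (hε₁ : ε₁ ∈ Set.Ioo (0:ℝ) 1) (hε₂ : ε₂ ∈ Set.Ioo (0:ℝ) 1)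
    (lam : ℝ) (hlam : 0 < lam)
    (hcond : 2 < min ε₁ (ε₂ / 4) * Real.logb 2 (1 / lam - 1))
    {M N : ℕ} (P : Fin M → X → ℝ) (Q : Fin N → Y → ℝ)
    (hP : ∀ i, IsProbDist (P i)) (hQ : ∀ j, IsProbDist (Q j))
    (D : Fin M → Fin N → Matrix (Fin d) (Fin d) ℂ)
    (hD : ∀ i j, (D i j).PosSemidef)
    (hDsum : ∑ i, ∑ j, D i j = (1 : Matrix (Fin d) (Fin d) ℂ))
    (hgood : ∀ i j, 1 - min ε₁ (ε₂ / 4)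
      ≤ ∑ x, ∑ y, P i x * Q j y * ((D i j * ρ x y).trace).re) :
    ∃ (M' N' : ℕ) (A : Fin M' → Finset (Fin M)) (B : Fin N' → Finset (Fin N)),
      ((1 : ℝ) / M) * 2 ^ (⌊lam * M⌋₊) ≤ (M' : ℝ) ∧
      ((1 : ℝ) / N) * 2 ^ (⌊lam * N⌋₊) ≤ (N' : ℝ) ∧
      (∀ m, (A m).Nonempty) ∧ (∀ n, (B n).Nonempty) ∧
      (∀ m, IsProbDist (fun x => ((1 : ℝ) / (A m).card) * ∑ i ∈ A m, P i x)) ∧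
      (∀ n, IsProbDist (fun y => ((1 : ℝ) / (B n).card) * ∑ j ∈ B n, Q j y)) ∧
      (∀ m n, 1 - ∑ x, ∑ y,
          (((1 : ℝ) / (A m).card) * ∑ i ∈ A m, P i x) *
          (((1 : ℝ) / (B n).card) * ∑ j ∈ B n, Q j y) *
          (((∑ i ∈ A m, ∑ j ∈ B n, D i j) * ρ x y).trace).re ≤ ε₁) ∧
      (∀ m n a b, (m, n) ≠ (a, b) →
        ∑ x, ∑ y,
          (((1 : ℝ) / (A m).card) * ∑ i ∈ A m, P i x) *
          (((1 : ℝ) / (B n).card) * ∑ j ∈ B n, Q j y) *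
          (((∑ i ∈ A a, ∑ j ∈ B b, D i j) * ρ x y).trace).re ≤ ε₂) := by
  set ε := min ε₁ (ε₂ / 4)
  have hε0 : 0 < ε := lt_min hε₁.1 (by linarith [hε₂.1])
  have hε1 : ε ≤ 1 := (min_le_left _ _).trans hε₁.2.le
  obtain ⟨M', A, hM', hAne, hA⟩ := exists_large_family_small_inter M hε0 hε1 hlam hcond
  obtain ⟨N', B, hN', hBne, hB⟩ := exists_large_family_small_inter N hε0 hε1 hlam hcond
  set W := decodingProb P Q D ρ
  have hW0 : ∀ p q, 0 ≤ W p q :=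
    decodingProb_nonneg (fun i => (hP i).1) (fun j => (hQ j).1) hD fun x y => (hρ x y).1
  have hW1 : ∀ p, ∑ q, W p q = 1 := sum_decodingProb_eq_one hP hQ hDsum fun x y => (hρ x y).2
  have hdiag : ∀ p, 1 - ε ≤ W p p := fun p => hgood p.1 p.2
  have hnorm : ∀ m n, (1 : ℝ) / #(A m) * (1 / #(B n)) = (#(A m ×ˢ B n) : ℝ)⁻¹ := by
    intro m n
    rw [card_product, Nat.cast_mul, mul_inv, one_div, one_div]
  refine ⟨M', N', A, B, hM', hN', hAne, hBne, fun m => IsProbDist.mixture hP (hAne m),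
    fun n => IsProbDist.mixture hQ (hBne n), fun m n => ?_, fun m n a b hmn => ?_⟩
  · rw [sum_mixture_trace_eq, hnorm]
    linarith [one_sub_le_inv_card_mul_sum_sum hW0 hdiag ((hAne m).product (hBne n)),
      min_le_left ε₁ (ε₂ / 4)]
  · have hS := (hAne m).product (hBne n)
    have hmn' : m ≠ a ∨ n ≠ b := not_and_or.mp fun h => hmn (Prod.ext h.1 h.2)
    have hinter := card_inter_product_le (hmn'.imp (hA m a) (hB n b))
    rw [sum_mixture_trace_eq, hnorm]
    calc _ ≤ ε + #((A m ×ˢ B n) ∩ (A a ×ˢ B b)) / #(A m ×ˢ B n) :=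
          inv_card_mul_sum_sum_le hW0 hW1 hdiag hS _
      _ ≤ ε + ε := by
          gcongr
          rwa [div_le_iff₀ (by exact_mod_cast hS.card_pos)]
      _ ≤ ε₂ := by linarith [min_le_right ε₁ (ε₂ / 4), hε₂.1]
end
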